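/- arXiv:2112.07377 — 4 statements merged into one kernel-verified Lean document; each statement's English description precedes it below -/
import Mathlib

section
/- Let Γ → Δ be a sequent not derivable in NMVL_A from a set of sequents Σ. Then there exists a set of labelled formulas Γ* ⊇ Γ, maximal with the property that no finite subset Γ′ ⊆ Γ* yields a Σ-derivation of Γ′ → Δ, and this Γ* is complete: for every formula φ there is exactly one k ∈ {1,…,n} with (φ,k) ∈ Γ*. -/
/-- Formulas over a set `C` of connectives (applied to lists of arguments). -/
inductive Fm (C : Type) : Type
  | atom : ℕ → Fm C
  | app : C → List (Fm C) → Fm C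

noncomputable instance {C : Type} : DecidableEq (Fm C) := Classical.decEq _

/-- A sequent of finite sets of labelled formulas. -/
structure Sequent (C : Type) [DecidableEq C] (n : ℕ) where
  ant : Finset (Fm C × Fin n)
  suc : Finset (Fm C × Fin n)

variable {C : Type} [DecidableEq C] {n : ℕ}

/-- A valuation legal w.r.t. the non-deterministic tables `tbl`. -/
def IsVal (tbl : C → List (Fin n) → Finset (Fin n)) (v : Fm C → Fin n) : Prop :=
  ∀ c args, v (Fm.app c args) ∈ tbl c (args.map v)

/-- A valuation satisfies a sequent. -/
def Sat (v : Fm C → Fin n) (S : Sequent C n) : Prop :=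
  (∀ p ∈ S.ant, v p.1 = p.2) → ∃ p ∈ S.suc, v p.1 = p.2

/-- Semantic entailment. -/
def Entails (tbl : C → List (Fin n) → Finset (Fin n)) (H : Set (Sequent C n)) (S : Sequent C n) : Prop :=
  ∀ v : Fm C → Fin n, IsVal tbl v → (∀ T ∈ H, Sat v T) → Sat v S

/-- The family (∗(φ₁,…,φ_ℓ)×k)⁻¹ of antecedent sets. -/
def Theta (tbl : C → List (Fin n) → Finset (Fin n)) (c : C) (args : List (Fm C)) (k : Fin n) :
    Set (Finset (Fm C × Fin n)) :=
  { Θ | ∃ ks : List (Fin n), ks.length = args.length ∧ k ∈ tbl c ks ∧ Θ = (args.zip ks).toFinset }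

/-- Λ ∈ ⋁(∗(φ₁,…,φ_ℓ)×k)⁻¹ : a choice set hitting each Θ_q and contained in their union. -/
def Choice (tbl : C → List (Fin n) → Finset (Fin n)) (c : C) (args : List (Fm C)) (k : Fin n)
    (Λ : Finset (Fm C × Fin n)) : Prop :=
  (∀ Θ ∈ Theta tbl c args k, ∃ x ∈ Θ, x ∈ Λ) ∧
  (∀ x ∈ Λ, ∃ Θ ∈ Theta tbl c args k, x ∈ Θ)

/-- Which optional axioms/rules a calculus has. -/
structure Rules where
  tableAx : Bool      -- table axioms (2)
  tableRuleS : Bool   -- succedent table rules (10)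
  dualAx : Bool       -- distributively dual axioms (13)
  anteRule : Bool     -- antecedent introduction rules (17)
  multiShift : Bool   -- K-L-multi-shift (16)
  cut : Bool
  res : Bool

/-- Derivability from hypothesis sequents `H`; axioms (ψ,k)→(ψ,k), L-shift, R-shift and
weakenings are always present, the other axioms/rules are governed by `R`. -/
inductive Deriv (R : Rules) (tbl : C → List (Fin n) → Finset (Fin n)) (H : Set (Sequent C n)) :
    Sequent C n → Prop
  | hyp {S} : S ∈ H → Deriv R tbl H S
  | ax (ψ : Fm C) (k : Fin n) : Deriv R tbl H ⟨{(ψ, k)}, {(ψ, k)}⟩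
  | tableAx (c : C) (args : List (Fm C)) (ks : List (Fin n))
      (hlen : ks.length = args.length) (h : R.tableAx = true) :
      Deriv R tbl H ⟨(args.zip ks).toFinset, (tbl c ks).image (fun k => (Fm.app c args, k))⟩
  | lshift {Γ Δ} (φ : Fm C) (k : Fin n) :
      Deriv R tbl H ⟨insert (φ, k) Γ, Δ⟩ →
      Deriv R tbl H ⟨Γ, Δ ∪ ({k}ᶜ : Finset (Fin n)).image (fun k' => (φ, k'))⟩
  | rshift {Γ Δ} (φ : Fm C) {k' k'' : Fin n} (h : k' ≠ k'') :
      Deriv R tbl H ⟨Γ, insert (φ, k') Δ⟩ → Deriv R tbl H ⟨insert (φ, k'') Γ, Δ⟩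
  | lweak {Γ Δ} (φ : Fm C) (k : Fin n) :
      Deriv R tbl H ⟨Γ, Δ⟩ → Deriv R tbl H ⟨insert (φ, k) Γ, Δ⟩
  | rweak {Γ Δ} (φ : Fm C) (k : Fin n) :
      Deriv R tbl H ⟨Γ, Δ⟩ → Deriv R tbl H ⟨Γ, insert (φ, k) Δ⟩
  | cut {Γ Δ} (φ : Fm C) (k : Fin n) (h : R.cut = true) :
      Deriv R tbl H ⟨Γ, insert (φ, k) Δ⟩ → Deriv R tbl H ⟨insert (φ, k) Γ, Δ⟩ →
      Deriv R tbl H ⟨Γ, Δ⟩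
  | res {Γ Δ' Δ''} (φ : Fm C) {k' k'' : Fin n} (h : R.res = true) (hk : k' ≠ k'') :
      Deriv R tbl H ⟨Γ, insert (φ, k') Δ'⟩ → Deriv R tbl H ⟨Γ, insert (φ, k'') Δ''⟩ →
      Deriv R tbl H ⟨Γ, Δ' ∪ Δ''⟩
  | tableRuleS {Γ Δ} (c : C) (args : List (Fm C)) (ks : List (Fin n))
      (hlen : ks.length = args.length) (h : R.tableRuleS = true)
      (prem : ∀ p ∈ args.zip ks, Deriv R tbl H ⟨Γ, insert p Δ⟩) :
      Deriv R tbl H ⟨Γ, Δ ∪ (tbl c ks).image (fun k => (Fm.app c args, k))⟩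
  | dualAx (c : C) (args : List (Fm C)) (k : Fin n) (Λ : Finset (Fm C × Fin n))
      (h : R.dualAx = true) (hΛ : Choice tbl c args k Λ) :
      Deriv R tbl H ⟨{(Fm.app c args, k)}, Λ⟩
  | anteRule {Γ Δ} (c : C) (args : List (Fm C)) (k : Fin n) (h : R.anteRule = true)
      (prem : ∀ ks : List (Fin n), ks.length = args.length → k ∈ tbl c ks →
        Deriv R tbl H ⟨Γ ∪ (args.zip ks).toFinset, Δ⟩) :
      Deriv R tbl H ⟨insert (Fm.app c args, k) Γ, Δ⟩
  | multiShift {Γ Δ} (φ : Fm C) (K : Finset (Fin n)) (h : R.multiShift = true)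
      (hK : K ≠ Finset.univ)
      (prem : ∀ k ∈ K, Deriv R tbl H ⟨insert (φ, k) Γ, Δ⟩) :
      Deriv R tbl H ⟨Γ, Δ ∪ Kᶜ.image (fun k' => (φ, k'))⟩

/-- NMVL_A : table axioms, cut and resolution. -/
def NMVL_A : Rules := ⟨true, false, false, false, false, true, true⟩
/-- NMVL_A with cut but without resolution. -/
def NMVL_A_cut : Rules := ⟨true, false, false, false, false, true, false⟩
/-- NMVL_A with resolution but without cut. -/
def NMVL_A_res : Rules := ⟨true, false, false, false, false, false, true⟩
/-- NMVL_R : succedent table rules, cut and resolution. -/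
def NMVL_R : Rules := ⟨false, true, false, false, false, true, true⟩
/-- NMVL_R without cut and resolution. -/
def NMVL_R_cf : Rules := ⟨false, true, false, false, false, false, false⟩
/-- NMVL_A^dd : distributively dual axioms, cut and resolution. -/
def NMVL_Add : Rules := ⟨false, false, true, false, false, true, true⟩
/-- NMVL_R^sd : antecedent table rules, multi-shift, cut and resolution. -/
def NMVL_Rsd : Rules := ⟨false, false, false, true, true, true, true⟩

/-!
Zorn's lemma applies to the sets `G` no finite part of which derives `Δ`, since this property
has finite character; a maximal such `G` contains `Γ`. It cannot contain two labels of one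
formula, because `(φ,k'),(φ,k'') → Δ` is derivable by R-shift. It contains some label of every
`φ`: otherwise, by maximality, each `(φ,k)` derives `Δ` together with a finite `B_k ⊆ G`, and
cutting these `n` sequents against `→ {φ} × {1,…,n}` derives `Δ` from `⋃ₖ B_k ⊆ G`.
-/

namespace Deriv

variable {R : Rules} {tbl : C → List (Fin n) → Finset (Fin n)} {H : Set (Sequent C n)}
  {Γ Δ : Finset (Fm C × Fin n)}

theorem weaken_left (h : Deriv R tbl H ⟨Γ, Δ⟩) (S : Finset (Fm C × Fin n)) :
    Deriv R tbl H ⟨S ∪ Γ, Δ⟩ := by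
  induction S using Finset.induction_on with
  | empty => simpa using h
  | insert _ _ _ ih => simpa only [Finset.insert_union] using ih.lweak _ _

theorem weaken_right (h : Deriv R tbl H ⟨Γ, Δ⟩) (S : Finset (Fm C × Fin n)) :
    Deriv R tbl H ⟨Γ, S ∪ Δ⟩ := by
  induction S using Finset.induction_on with
  | empty => simpa using h
  | insert _ _ _ ih => simpa only [Finset.insert_union] using ih.rweak _ _

theorem mono {Γ' Δ' : Finset (Fm C × Fin n)} (h : Deriv R tbl H ⟨Γ, Δ⟩) (hΓ : Γ ⊆ Γ')
    (hΔ : Δ ⊆ Δ') : Deriv R tbl H ⟨Γ', Δ'⟩ := by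
  simpa only [Finset.union_eq_left.mpr hΓ, Finset.union_eq_left.mpr hΔ] using
    (h.weaken_left Γ').weaken_right Δ'

theorem all_labels [NeZero n] (φ : Fm C) :
    Deriv R tbl H ⟨∅, Finset.univ.image (fun k => (φ, k))⟩ := by
  have hshift := (Deriv.ax (R := R) (tbl := tbl) (H := H) φ 0).lshift (Γ := ∅) φ 0
  have hlabels : ({(φ, 0)} : Finset (Fm C × Fin n)) ∪ ({0}ᶜ : Finset (Fin n)).image (φ, ·) =
      Finset.univ.image (φ, ·) := by
    rw [← Finset.image_singleton (φ, ·), ← Finset.image_union, Finset.union_compl]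
  simpa only [insert_empty_eq, hlabels] using hshift

theorem cut_labels (hcut : R.cut = true) (φ : Fm C) (K : Finset (Fin n))
    (hprem : ∀ k ∈ K, Deriv R tbl H ⟨insert (φ, k) Γ, Δ⟩)
    (hlabels : Deriv R tbl H ⟨Γ, Δ ∪ K.image (φ, ·)⟩) : Deriv R tbl H ⟨Γ, Δ⟩ := by
  induction K using Finset.induction_on with
  | empty => simpa using hlabels
  | @insert k K _ ih =>
    refine ih (fun j hj => hprem j (Finset.mem_insert_of_mem hj)) ?_
    rw [Finset.image_insert, Finset.union_insert] at hlabels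
    exact hlabels.cut φ k hcut
      ((hprem k (Finset.mem_insert_self k K)).mono subset_rfl Finset.subset_union_left)

theorem of_two_labels (Δ : Finset (Fm C × Fin n)) (φ : Fm C) {k k' : Fin n} (hk : k ≠ k') :
    Deriv R tbl H ⟨{(φ, k'), (φ, k)}, Δ⟩ :=
  Deriv.rshift φ hk ((Deriv.ax φ k).mono subset_rfl (by simp))

end Deriv

section Consistent

variable (R : Rules) (tbl : C → List (Fin n) → Finset (Fin n)) (H : Set (Sequent C n))
  (Δ : Finset (Fm C × Fin n))

def Consistent (G : Set (Fm C × Fin n)) : Prop :=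
  ∀ Γ : Finset (Fm C × Fin n), ↑Γ ⊆ G → ¬ Deriv R tbl H ⟨Γ, Δ⟩

variable {R tbl H Δ}

theorem consistent_coe_iff {Γ : Finset (Fm C × Fin n)} :
    Consistent R tbl H Δ Γ ↔ ¬ Deriv R tbl H ⟨Γ, Δ⟩ :=
  ⟨fun h => h Γ subset_rfl, fun h _ hsub hd => h (hd.mono (by exact_mod_cast hsub) subset_rfl)⟩

theorem consistent_sUnion_of_isChain {c : Set (Set (Fm C × Fin n))}
    (hc : ∀ G ∈ c, Consistent R tbl H Δ G) (hchain : IsChain (· ⊆ ·) c) (hne : c.Nonempty) :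
    Consistent R tbl H Δ (⋃₀ c) := fun Γ hsub => by
  obtain ⟨G, hG, hΓG⟩ := hchain.directedOn.exists_mem_subset_of_finite_of_subset_sUnion hne
    Γ.finite_toSet hsub
  exact hc G hG Γ hΓG

theorem exists_maximal_consistent {Γ : Finset (Fm C × Fin n)} (h : ¬ Deriv R tbl H ⟨Γ, Δ⟩) :
    ∃ G, ↑Γ ⊆ G ∧ Maximal (Consistent R tbl H Δ) G :=
  zorn_subset_nonempty {G | Consistent R tbl H Δ G}
    (fun _ hc hchain hne => ⟨_, consistent_sUnion_of_isChain hc hchain hne,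
      fun _ => Set.subset_sUnion_of_mem⟩) _ (consistent_coe_iff.mpr h)

theorem Consistent.eq_of_mem {G : Set (Fm C × Fin n)} (hG : Consistent R tbl H Δ G)
    {φ : Fm C} {k k' : Fin n} (hk : (φ, k) ∈ G) (hk' : (φ, k') ∈ G) : k = k' := by
  by_contra hne
  exact hG _ (by simp [Set.insert_subset_iff, hk, hk']) (Deriv.of_two_labels Δ φ hne)

theorem exists_deriv_insert_of_maximal_consistent {G : Set (Fm C × Fin n)}
    (hG : Maximal (Consistent R tbl H Δ) G) {p : Fm C × Fin n} (hp : p ∉ G) :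
    ∃ B : Finset (Fm C × Fin n), ↑B ⊆ G ∧ Deriv R tbl H ⟨insert p B, Δ⟩ := by
  have hins : ¬ Consistent R tbl H Δ (insert p G) :=
    fun hcons => hp (hG.2 hcons (Set.subset_insert p G) (Set.mem_insert p G))
  simp only [Consistent, not_forall, not_not] at hins
  obtain ⟨Γ, hΓ, hd⟩ := hins
  refine ⟨Γ.erase p, ?_, hd.mono (Finset.insert_erase_subset p Γ) subset_rfl⟩
  simpa [Set.subset_def, or_iff_not_imp_left] using hΓ

theorem exists_mem_of_maximal_consistent [NeZero n] (hcut : R.cut = true)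
    {G : Set (Fm C × Fin n)} (hG : Maximal (Consistent R tbl H Δ) G) (φ : Fm C) :
    ∃ k, (φ, k) ∈ G := by
  by_contra! hnone
  choose B hBG hBd using fun k => exists_deriv_insert_of_maximal_consistent hG (hnone k)
  have hsub : ∀ k, B k ⊆ Finset.univ.biUnion B :=
    fun k => Finset.subset_biUnion_of_mem B (Finset.mem_univ k)
  refine hG.1 (Finset.univ.biUnion B) (by simpa using hBG) ?_
  exact Deriv.cut_labels hcut φ Finset.univ
    (fun k _ => (hBd k).mono (Finset.insert_subset_insert _ (hsub k)) subset_rfl)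
    (Deriv.all_labels φ |>.mono (Finset.empty_subset _) Finset.subset_union_right)

end Consistent

theorem stmt5_general (hn : 2 ≤ n) (tbl : C → List (Fin n) → Finset (Fin n))
    (H : Set (Sequent C n))
    (Γ Δ : Finset (Fm C × Fin n)) (hund : ¬ Deriv NMVL_A tbl H ⟨Γ, Δ⟩) :
    ∃ G : Set (Fm C × Fin n), ↑Γ ⊆ G ∧
      (∀ Γ' : Finset (Fm C × Fin n), ↑Γ' ⊆ G → ¬ Deriv NMVL_A tbl H ⟨Γ', Δ⟩) ∧
      (∀ G' : Set (Fm C × Fin n), G ⊆ G' →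
        (∀ Γ' : Finset (Fm C × Fin n), ↑Γ' ⊆ G' → ¬ Deriv NMVL_A tbl H ⟨Γ', Δ⟩) → G' = G) ∧
      (∀ φ : Fm C, ∃! k : Fin n, (φ, k) ∈ G) := by
  have : NeZero n := ⟨by omega⟩
  obtain ⟨G, hΓG, hG⟩ := exists_maximal_consistent hund
  refine ⟨G, hΓG, hG.1, fun G' hGG' hG' => (hG.eq_of_subset hG' hGG').symm, fun φ => ?_⟩
  obtain ⟨k, hk⟩ := exists_mem_of_maximal_consistent rfl hG φ
  exact ⟨k, hk, fun k' hk' => hG.1.eq_of_mem hk' hk⟩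

/-- existence of a maximal complete extension of the antecedent of an
underivable sequent. -/
theorem stmt5 (hn : 2 ≤ n) (tbl : C → List (Fin n) → Finset (Fin n))
    (htbl : ∀ c ks, (tbl c ks).Nonempty) (H : Set (Sequent C n))
    (Γ Δ : Finset (Fm C × Fin n)) (hund : ¬ Deriv NMVL_A tbl H ⟨Γ, Δ⟩) :
    ∃ G : Set (Fm C × Fin n), ↑Γ ⊆ G ∧
      (∀ Γ' : Finset (Fm C × Fin n), ↑Γ' ⊆ G → ¬ Deriv NMVL_A tbl H ⟨Γ', Δ⟩) ∧
      (∀ G' : Set (Fm C × Fin n), G ⊆ G' →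
        (∀ Γ' : Finset (Fm C × Fin n), ↑Γ' ⊆ G' → ¬ Deriv NMVL_A tbl H ⟨Γ', Δ⟩) → G' = G) ∧
      (∀ φ : Fm C, ∃! k : Fin n, (φ, k) ∈ G) :=
  stmt5_general hn tbl H Γ Δ hund
end

section
/- If Γ* is a maximal set of labelled formulas (as in the completeness proof for NMVL_A) containing exactly one label per formula, then the function v defined by v(φ) = v_k iff (φ,k) ∈ Γ* is a legal valuation: for every ℓ-ary connective ∗ and formulas φ₁,…,φ_ℓ, v(∗(φ₁,…,φ_ℓ)) ∈ ∗(v(φ₁),…,v(φ_ℓ)). -/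
variable {C : Type} [DecidableEq C] {n : ℕ}

theorem List.apply_eq_of_mem_zip_map {α β : Type*} {f : α → β} {l : List α} {p : α × β}
    (hp : p ∈ l.zip (l.map f)) : f p.1 = p.2 := by
  rw [← List.map_id l, List.map_map, List.zip_map', List.mem_map] at hp
  obtain ⟨a, -, rfl⟩ := hp
  rfl

namespace Deriv

variable {R : Rules} {tbl : C → List (Fin n) → Finset (Fin n)} {H : Set (Sequent C n)}

theorem rweak_union {Γ Δ : Finset (Fm C × Fin n)} (Δ' : Finset (Fm C × Fin n))
    (h : Deriv R tbl H ⟨Γ, Δ⟩) : Deriv R tbl H ⟨Γ, Δ ∪ Δ'⟩ := by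
  induction Δ' using Finset.induction with
  | empty => simpa using h
  | insert p _ _ ih => simpa [Finset.union_insert] using ih.rweak p.1 p.2

/-- Every R-shift introduces the same antecedent entry `(ψ, k)`, which `insert` absorbs. -/
theorem rshift_of_forall_ne {ψ : Fm C} {k : Fin n} {Γ Δ : Finset (Fm C × Fin n)}
    (Δ' : Finset (Fm C × Fin n)) (hΔ' : ∀ p ∈ Δ', p.1 = ψ ∧ p.2 ≠ k)
    (h : Deriv R tbl H ⟨Γ, Δ' ∪ Δ⟩) : Deriv R tbl H ⟨insert (ψ, k) Γ, Δ⟩ := by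
  induction Δ' using Finset.induction generalizing Γ with
  | empty => simpa using h.lweak ψ k
  | insert p s _ ih =>
    obtain ⟨hψ, hk⟩ := hΔ' p (Finset.mem_insert_self p s)
    have hp : p = (ψ, p.2) := Prod.ext hψ rfl
    rw [Finset.insert_union, hp] at h
    have := ih (fun q hq => hΔ' q (Finset.mem_insert_of_mem hq)) (h.rshift ψ hk)
    rwa [Finset.insert_idem] at this

end Deriv

/-- If `v` violated the table of `c` at `args`, the table axiom for
the values `args.map v`, shifted to the left, would derive `→ Δ` from finitely many labelled
formulas true under `v`. -/
theorem isVal_of_not_deriv_of_graph {R : Rules} (hR : R.tableAx = true)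
    {tbl : C → List (Fin n) → Finset (Fin n)} {H : Set (Sequent C n)}
    {Δ : Finset (Fm C × Fin n)} {v : Fm C → Fin n}
    (hcons : ∀ Γ' : Finset (Fm C × Fin n), (∀ p ∈ Γ', v p.1 = p.2) →
      ¬ Deriv R tbl H ⟨Γ', Δ⟩) :
    IsVal tbl v := by
  intro c args
  by_contra hv
  have hlen : (args.map v).length = args.length := List.length_map v
  have hshift : ∀ p ∈ (tbl c (args.map v)).image (Fm.app c args, ·),
      p.1 = Fm.app c args ∧ p.2 ≠ v (Fm.app c args) := by
    simp only [Finset.mem_image]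
    rintro _ ⟨k, hk, rfl⟩
    exact ⟨rfl, fun hkv => hv (hkv ▸ hk)⟩
  refine hcons _ ?_ (Deriv.rshift_of_forall_ne _ hshift
    ((Deriv.tableAx c args (args.map v) hlen hR).rweak_union Δ))
  simp only [Finset.mem_insert, List.mem_toFinset, forall_eq_or_imp, true_and]
  exact fun _ => List.apply_eq_of_mem_zip_map

theorem stmt6_general (tbl : C → List (Fin n) → Finset (Fin n)) (H : Set (Sequent C n))
    (Δ : Finset (Fm C × Fin n)) (G : Set (Fm C × Fin n))
    (hcons : ∀ Γ' : Finset (Fm C × Fin n), ↑Γ' ⊆ G → ¬ Deriv NMVL_A tbl H ⟨Γ', Δ⟩)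
    (v : Fm C → Fin n) (hv : ∀ (φ : Fm C) (k : Fin n), v φ = k ↔ (φ, k) ∈ G) :
    IsVal tbl v :=
  isVal_of_not_deriv_of_graph rfl fun Γ' hΓ' =>
    hcons Γ' fun p hp => (hv p.1 p.2).mp (hΓ' p hp)

/-- the function read off a maximal complete set is a legal valuation. -/
theorem stmt6 (hn : 2 ≤ n) (tbl : C → List (Fin n) → Finset (Fin n))
    (htbl : ∀ c ks, (tbl c ks).Nonempty) (H : Set (Sequent C n))
    (Γ Δ : Finset (Fm C × Fin n)) (G : Set (Fm C × Fin n)) (hG : ↑Γ ⊆ G)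
    (hcons : ∀ Γ' : Finset (Fm C × Fin n), ↑Γ' ⊆ G → ¬ Deriv NMVL_A tbl H ⟨Γ', Δ⟩)
    (hmax : ∀ G' : Set (Fm C × Fin n), G ⊆ G' →
      (∀ Γ' : Finset (Fm C × Fin n), ↑Γ' ⊆ G' → ¬ Deriv NMVL_A tbl H ⟨Γ', Δ⟩) → G' = G)
    (hcomp : ∀ φ : Fm C, ∃! k : Fin n, (φ, k) ∈ G)
    (v : Fm C → Fin n) (hv : ∀ (φ : Fm C) (k : Fin n), v φ = k ↔ (φ, k) ∈ G) :
    IsVal tbl v :=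
  stmt6_general tbl H Δ G hcons v hv
end

section
/- The calculi NMVL_A and NMVL_R are deductively equivalent: for any set of sequents Σ and any sequent S, Σ ⊢_{NMVL_R} S if and only if Σ ⊢_{NMVL_A} S. -/
variable {C : Type} [DecidableEq C] {n : ℕ}

/-!
Each calculus simulates the other's table rule. In NMVL_R a table axiom is the table rule applied
to the identity axioms `(φⱼ, kⱼ) → (φⱼ, kⱼ)`, weakened to the common antecedent `{(φⱼ, kⱼ)}ⱼ`. In
NMVL_A the table rule is recovered by weakening the table axiom to `Γ, {(φⱼ, kⱼ)}ⱼ → Δ, …` and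
cutting the `(φⱼ, kⱼ)` out of the antecedent one at a time against the premises `Γ → Δ, (φⱼ, kⱼ)`.
All other rules are common to both calculi.
-/

namespace Deriv

variable {R : Rules} {tbl : C → List (Fin n) → Finset (Fin n)} {H : Set (Sequent C n)}

theorem weaken_ant {Γ Δ : Finset (Fm C × Fin n)} (h : Deriv R tbl H ⟨Γ, Δ⟩)
    (Γ₀ : Finset (Fm C × Fin n)) : Deriv R tbl H ⟨Γ ∪ Γ₀, Δ⟩ := by
  induction Γ₀ using Finset.induction_on with
  | empty => simpa using h
  | insert p Γ₀ _ ih =>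
    rw [Finset.union_insert]
    exact lweak p.1 p.2 ih

theorem weaken_suc {Γ Δ : Finset (Fm C × Fin n)} (h : Deriv R tbl H ⟨Γ, Δ⟩)
    (Δ₀ : Finset (Fm C × Fin n)) : Deriv R tbl H ⟨Γ, Δ ∪ Δ₀⟩ := by
  induction Δ₀ using Finset.induction_on with
  | empty => simpa using h
  | insert p Δ₀ _ ih =>
    rw [Finset.union_insert]
    exact rweak p.1 p.2 ih

theorem weaken {Γ Δ Γ' Δ' : Finset (Fm C × Fin n)} (h : Deriv R tbl H ⟨Γ, Δ⟩)
    (hΓ : Γ ⊆ Γ') (hΔ : Δ ⊆ Δ') : Deriv R tbl H ⟨Γ', Δ'⟩ := by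
  have h' := (h.weaken_ant Γ').weaken_suc Δ'
  rwa [Finset.union_eq_right.mpr hΓ, Finset.union_eq_right.mpr hΔ] at h'

theorem cut_finset (hcut : R.cut = true) (L : Finset (Fm C × Fin n)) {Γ Δ : Finset (Fm C × Fin n)}
    (hL : ∀ p ∈ L, Deriv R tbl H ⟨Γ, insert p Δ⟩) (h : Deriv R tbl H ⟨Γ ∪ L, Δ⟩) :
    Deriv R tbl H ⟨Γ, Δ⟩ := by
  induction L using Finset.induction_on generalizing Γ with
  | empty => simpa using h
  | insert p L _ ih =>
    rw [Finset.union_insert] at h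
    have hp : Deriv R tbl H ⟨Γ ∪ L, insert p Δ⟩ :=
      (hL p (Finset.mem_insert_self p L)).weaken Finset.subset_union_left subset_rfl
    exact ih (fun q hq => hL q (Finset.mem_insert_of_mem hq)) (cut p.1 p.2 hcut hp h)

theorem tableAx_of_tableRuleS (hR : R.tableRuleS = true) (c : C) (args : List (Fm C))
    (ks : List (Fin n)) (hlen : ks.length = args.length) :
    Deriv R tbl H ⟨(args.zip ks).toFinset, (tbl c ks).image (fun k => (Fm.app c args, k))⟩ := by
  have identity (p) (hp : p ∈ args.zip ks) : Deriv R tbl H ⟨(args.zip ks).toFinset, insert p ∅⟩ :=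
    (ax p.1 p.2).weaken (by simpa using hp) subset_rfl
  simpa using tableRuleS c args ks hlen hR identity

theorem tableRuleS_of_tableAx (hA : R.tableAx = true) (hcut : R.cut = true)
    {Γ Δ : Finset (Fm C × Fin n)} (c : C) (args : List (Fm C)) (ks : List (Fin n))
    (hlen : ks.length = args.length) (prem : ∀ p ∈ args.zip ks, Deriv R tbl H ⟨Γ, insert p Δ⟩) :
    Deriv R tbl H ⟨Γ, Δ ∪ (tbl c ks).image (fun k => (Fm.app c args, k))⟩ := by
  refine cut_finset hcut (args.zip ks).toFinset (fun p hp => ?_) ?_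
  · exact (prem p (List.mem_toFinset.mp hp)).weaken subset_rfl
      (Finset.insert_subset_insert p Finset.subset_union_left)
  · exact (tableAx c args ks hlen hA).weaken Finset.subset_union_right Finset.subset_union_right

theorem simulate {R' : Rules} (hcut : R.cut = true → R'.cut = true)
    (hres : R.res = true → R'.res = true) (hdual : R.dualAx = true → R'.dualAx = true)
    (hante : R.anteRule = true → R'.anteRule = true)
    (hmulti : R.multiShift = true → R'.multiShift = true)
    (htableAx : R.tableAx = true → ∀ c args (ks : List (Fin n)), ks.length = args.length →
      Deriv R' tbl H ⟨(args.zip ks).toFinset, (tbl c ks).image (fun k => (Fm.app c args, k))⟩)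
    (htableRuleS : R.tableRuleS = true → ∀ (Γ Δ : Finset (Fm C × Fin n)) c args ks,
      ks.length = args.length → (∀ p ∈ args.zip ks, Deriv R' tbl H ⟨Γ, insert p Δ⟩) →
      Deriv R' tbl H ⟨Γ, Δ ∪ (tbl c ks).image (fun k => (Fm.app c args, k))⟩)
    {S : Sequent C n} (h : Deriv R tbl H S) : Deriv R' tbl H S := by
  induction h with
  | hyp hS => exact hyp hS
  | ax ψ k => exact ax ψ k
  | tableAx c args ks hlen h => exact htableAx h c args ks hlen
  | lshift φ k _ ih => exact lshift φ k ih
  | rshift φ hk _ ih => exact rshift φ hk ih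
  | lweak φ k _ ih => exact lweak φ k ih
  | rweak φ k _ ih => exact rweak φ k ih
  | cut φ k h _ _ ih₁ ih₂ => exact cut φ k (hcut h) ih₁ ih₂
  | res φ h hk _ _ ih₁ ih₂ => exact res φ (hres h) hk ih₁ ih₂
  | tableRuleS c args ks hlen h _ ih => exact htableRuleS h _ _ c args ks hlen ih
  | dualAx c args k Λ h hΛ => exact dualAx c args k Λ (hdual h) hΛ
  | anteRule c args k h _ ih => exact anteRule c args k (hante h) ih
  | multiShift φ K h hK _ ih => exact multiShift φ K (hmulti h) hK ih

end Deriv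

theorem stmt9_general (tbl : C → List (Fin n) → Finset (Fin n))
    (H : Set (Sequent C n)) (S : Sequent C n) :
    Deriv NMVL_R tbl H S ↔ Deriv NMVL_A tbl H S := by
  constructor
  · refine Deriv.simulate (by decide) (by decide) (by decide) (by decide) (by decide) nofun ?_
    intro _ Γ Δ c args ks hlen prem
    exact Deriv.tableRuleS_of_tableAx rfl rfl c args ks hlen prem
  · refine Deriv.simulate (by decide) (by decide) (by decide) (by decide) (by decide) ?_ nofun
    intro _ c args ks hlen
    exact Deriv.tableAx_of_tableRuleS rfl c args ks hlen

/-- NMVL_A and NMVL_R are deductively equivalent. -/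
theorem stmt9 (hn : 2 ≤ n) (tbl : C → List (Fin n) → Finset (Fin n))
    (htbl : ∀ c ks, (tbl c ks).Nonempty) (H : Set (Sequent C n)) (S : Sequent C n) :
    Deriv NMVL_R tbl H S ↔ Deriv NMVL_A tbl H S :=
  stmt9_general tbl H S
end

section
/- NMVL_R is sound and strongly complete: Σ ⊢_{NMVL_R} Γ → Δ if and only if every valuation satisfying all sequents in Σ satisfies Γ → Δ. -/
variable {C : Type} [DecidableEq C] {n : ℕ}

theorem List.forall_mem_zip_iff_map_eq {α β : Type*} (v : α → β) :
    ∀ {as : List α} {bs : List β}, bs.length = as.length →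
      ((∀ p ∈ as.zip bs, v p.1 = p.2) ↔ as.map v = bs)
  | [], [], _ => by simp
  | a :: as, b :: bs, h => by
    rw [zip_cons_cons, forall_mem_cons, map_cons, cons.injEq,
      forall_mem_zip_iff_map_eq v (by simpa using h)]
  | [], _ :: _, h | _ :: _, [], h => by simp at h

theorem List.forall_mem_zip_map_self {α β : Type*} (v : α → β) (as : List α) :
    ∀ p ∈ as.zip (as.map v), v p.1 = p.2 :=
  (forall_mem_zip_iff_map_eq v (by simp)).2 rfl

section Soundness

variable {tbl : C → List (Fin n) → Finset (Fin n)} {v : Fm C → Fin n}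
  {Γ Γ' Δ Δ' : Finset (Fm C × Fin n)}

theorem Sat.mono (hΓ : Γ ⊆ Γ') (hΔ : Δ ⊆ Δ') (h : Sat v ⟨Γ, Δ⟩) : Sat v ⟨Γ', Δ'⟩ :=
  fun hant =>
    let ⟨p, hp, he⟩ := h fun p hp => hant p (hΓ hp)
    ⟨p, hΔ hp, he⟩

theorem sat_ax (ψ : Fm C) (k : Fin n) : Sat v ⟨{(ψ, k)}, {(ψ, k)}⟩ :=
  fun hant => ⟨_, Finset.mem_singleton_self _, hant _ (Finset.mem_singleton_self _)⟩

theorem sat_tableAx (hv : IsVal tbl v) (c : C) (args : List (Fm C)) {ks : List (Fin n)}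
    (hlen : ks.length = args.length) :
    Sat v ⟨(args.zip ks).toFinset, (tbl c ks).image (fun k => (Fm.app c args, k))⟩ :=
  fun hant => ⟨_, Finset.mem_image_of_mem _ <|
    (List.forall_mem_zip_iff_map_eq v hlen).1 (fun p hp => hant p (List.mem_toFinset.2 hp)) ▸
      hv c args, rfl⟩

theorem sat_lshift (φ : Fm C) (k : Fin n) (h : Sat v ⟨insert (φ, k) Γ, Δ⟩) :
    Sat v ⟨Γ, Δ ∪ ({k}ᶜ : Finset (Fin n)).image (fun k' => (φ, k'))⟩ := by
  intro hant
  by_cases hφ : v φ = k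
  · obtain ⟨p, hp, he⟩ := h ((Finset.forall_mem_insert _ _ _).2 ⟨hφ, hant⟩)
    exact ⟨p, Finset.mem_union_left _ hp, he⟩
  · exact ⟨(φ, v φ), by simp [hφ], rfl⟩

theorem sat_rshift (φ : Fm C) {k' k'' : Fin n} (hk : k' ≠ k'')
    (h : Sat v ⟨Γ, insert (φ, k') Δ⟩) : Sat v ⟨insert (φ, k'') Γ, Δ⟩ := by
  intro hant
  rw [Finset.forall_mem_insert] at hant
  obtain ⟨p, hp, he⟩ := h hant.2
  rcases Finset.mem_insert.1 hp with rfl | hp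
  · exact absurd (he.symm.trans hant.1) hk
  · exact ⟨p, hp, he⟩

theorem sat_cut (φ : Fm C) (k : Fin n) (h₁ : Sat v ⟨Γ, insert (φ, k) Δ⟩)
    (h₂ : Sat v ⟨insert (φ, k) Γ, Δ⟩) : Sat v ⟨Γ, Δ⟩ := by
  intro hant
  obtain ⟨p, hp, he⟩ := h₁ hant
  rcases Finset.mem_insert.1 hp with rfl | hp
  · exact h₂ ((Finset.forall_mem_insert _ _ _).2 ⟨he, hant⟩)
  · exact ⟨p, hp, he⟩

theorem sat_res (φ : Fm C) {k' k'' : Fin n} (hk : k' ≠ k'')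
    (h₁ : Sat v ⟨Γ, insert (φ, k') Δ⟩) (h₂ : Sat v ⟨Γ, insert (φ, k'') Δ'⟩) :
    Sat v ⟨Γ, Δ ∪ Δ'⟩ := by
  intro hant
  obtain ⟨p, hp, he⟩ := h₁ hant
  obtain ⟨q, hq, hqe⟩ := h₂ hant
  rcases Finset.mem_insert.1 hp with rfl | hp
  · rcases Finset.mem_insert.1 hq with rfl | hq
    · exact absurd (he.symm.trans hqe) hk
    · exact ⟨q, Finset.mem_union_right _ hq, hqe⟩
  · exact ⟨p, Finset.mem_union_left _ hp, he⟩

theorem sat_tableRuleS (hv : IsVal tbl v) (c : C) (args : List (Fm C)) {ks : List (Fin n)}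
    (hlen : ks.length = args.length) (prem : ∀ p ∈ args.zip ks, Sat v ⟨Γ, insert p Δ⟩) :
    Sat v ⟨Γ, Δ ∪ (tbl c ks).image (fun k => (Fm.app c args, k))⟩ := by
  intro hant
  by_cases hΔ : ∃ p ∈ Δ, v p.1 = p.2
  · obtain ⟨p, hp, he⟩ := hΔ
    exact ⟨p, Finset.mem_union_left _ hp, he⟩
  · have hzip : ∀ p ∈ args.zip ks, v p.1 = p.2 := fun p hp => by
      obtain ⟨q, hq, he⟩ := prem p hp hant
      rcases Finset.mem_insert.1 hq with rfl | hq
      · exact he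
      · exact absurd ⟨q, hq, he⟩ hΔ
    obtain ⟨p, hp, he⟩ := sat_tableAx hv c args hlen fun p hp => hzip p (List.mem_toFinset.1 hp)
    exact ⟨p, Finset.mem_union_right _ hp, he⟩

theorem sat_dualAx (hv : IsVal tbl v) {c : C} {args : List (Fm C)} {k : Fin n}
    {Λ : Finset (Fm C × Fin n)} (hΛ : Choice tbl c args k Λ) :
    Sat v ⟨{(Fm.app c args, k)}, Λ⟩ := by
  intro hant
  have hk : v (Fm.app c args) = k := hant _ (Finset.mem_singleton_self _)
  obtain ⟨p, hpΘ, hpΛ⟩ := hΛ.1 _ ⟨args.map v, by simp, hk ▸ hv c args, rfl⟩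
  exact ⟨p, hpΛ, List.forall_mem_zip_map_self v args p (List.mem_toFinset.1 hpΘ)⟩

theorem sat_anteRule (hv : IsVal tbl v) (c : C) (args : List (Fm C)) (k : Fin n)
    (prem : ∀ ks : List (Fin n), ks.length = args.length → k ∈ tbl c ks →
      Sat v ⟨Γ ∪ (args.zip ks).toFinset, Δ⟩) :
    Sat v ⟨insert (Fm.app c args, k) Γ, Δ⟩ := by
  intro hant
  rw [Finset.forall_mem_insert] at hant
  have hk : v (Fm.app c args) = k := hant.1
  refine prem (args.map v) (by simp) (hk ▸ hv c args) fun p hp => ?_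
  rcases Finset.mem_union.1 hp with hp | hp
  · exact hant.2 p hp
  · exact List.forall_mem_zip_map_self v args p (List.mem_toFinset.1 hp)

theorem sat_multiShift (φ : Fm C) (K : Finset (Fin n))
    (prem : ∀ k ∈ K, Sat v ⟨insert (φ, k) Γ, Δ⟩) :
    Sat v ⟨Γ, Δ ∪ Kᶜ.image (fun k' => (φ, k'))⟩ := by
  intro hant
  by_cases hφ : v φ ∈ K
  · obtain ⟨p, hp, he⟩ := prem _ hφ ((Finset.forall_mem_insert _ _ _).2 ⟨rfl, hant⟩)
    exact ⟨p, Finset.mem_union_left _ hp, he⟩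
  · exact ⟨(φ, v φ), by simp [hφ], rfl⟩

theorem Deriv.sat {R : Rules} {H : Set (Sequent C n)} {S : Sequent C n}
    (d : Deriv R tbl H S) (hv : IsVal tbl v) (hH : ∀ T ∈ H, Sat v T) : Sat v S := by
  induction d with
  | hyp h => exact hH _ h
  | ax ψ k => exact sat_ax ψ k
  | tableAx c args _ hlen => exact sat_tableAx hv c args hlen
  | lshift φ k _ ih => exact sat_lshift φ k ih
  | rshift φ hk _ ih => exact sat_rshift φ hk ih
  | lweak _ _ _ ih => exact ih.mono (Finset.subset_insert _ _) subset_rfl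
  | rweak _ _ _ ih => exact ih.mono subset_rfl (Finset.subset_insert _ _)
  | cut φ k _ _ _ ih₁ ih₂ => exact sat_cut φ k ih₁ ih₂
  | res φ _ hk _ _ ih₁ ih₂ => exact sat_res φ hk ih₁ ih₂
  | tableRuleS c args _ hlen _ _ ih => exact sat_tableRuleS hv c args hlen ih
  | dualAx _ _ _ _ _ hΛ => exact sat_dualAx hv hΛ
  | anteRule c args k _ _ ih => exact sat_anteRule hv c args k ih
  | multiShift φ K _ _ _ ih => exact sat_multiShift φ K ih

theorem Deriv.entails {R : Rules} {H : Set (Sequent C n)} {S : Sequent C n}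
    (d : Deriv R tbl H S) : Entails tbl H S :=
  fun _ hv hH => d.sat hv hH

end Soundness

section Completeness

variable {R : Rules} {tbl : C → List (Fin n) → Finset (Fin n)} {H : Set (Sequent C n)}
  {Γ Γ' Δ Δ' : Finset (Fm C × Fin n)}

theorem Deriv.mono_s10 (hΓ : Γ ⊆ Γ') (hΔ : Δ ⊆ Δ') (d : Deriv R tbl H ⟨Γ, Δ⟩) :
    Deriv R tbl H ⟨Γ', Δ'⟩ := by
  have hleft : ∀ E, Deriv R tbl H ⟨Γ ∪ E, Δ⟩ := fun E => by
    induction E using Finset.induction_on with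
    | empty => simpa using d
    | insert φk _ _ ih => rw [Finset.union_insert]; exact ih.lweak φk.1 φk.2
  have hright : ∀ E, Deriv R tbl H ⟨Γ', Δ ∪ E⟩ := fun E => by
    induction E using Finset.induction_on with
    | empty => simpa [Finset.union_eq_right.2 hΓ] using hleft Γ'
    | insert φk _ _ ih => rw [Finset.union_insert]; exact ih.rweak φk.1 φk.2
  simpa [Finset.union_eq_right.2 hΔ] using hright Δ'

theorem Deriv.of_mem (p : Fm C × Fin n) (hΓ : p ∈ Γ) (hΔ : p ∈ Δ) : Deriv R tbl H ⟨Γ, Δ⟩ :=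
  (Deriv.ax p.1 p.2).mono_s10 (Finset.singleton_subset_iff.2 hΓ) (Finset.singleton_subset_iff.2 hΔ)

theorem Deriv.shift_succedent (g : Fm C → Fin n) (d : Deriv R tbl H ⟨Γ, Δ⟩)
    (hg : ∀ p ∈ Δ, g p.1 ≠ p.2) :
    Deriv R tbl H ⟨Γ ∪ Δ.image (fun p => (p.1, g p.1)), ∅⟩ := by
  induction Δ using Finset.induction_on generalizing Γ with
  | empty => simpa using d
  | insert p Δ _ ih =>
    rw [Finset.image_insert, Finset.union_insert, ← Finset.insert_union]
    rw [Finset.forall_mem_insert] at hg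
    exact ih (d.rshift p.1 hg.1.symm) hg.2

theorem Deriv.cut_image (hcut : R.cut = true) (φ : Fm C) {K : Finset (Fin n)}
    (hK : ∀ k ∈ K, Deriv R tbl H ⟨insert (φ, k) Γ, Δ⟩)
    (d : Deriv R tbl H ⟨Γ, Δ ∪ K.image (fun k => (φ, k))⟩) : Deriv R tbl H ⟨Γ, Δ⟩ := by
  induction K using Finset.induction_on with
  | empty => simpa using d
  | insert k K _ ih =>
    rw [Finset.forall_mem_insert] at hK
    rw [Finset.image_insert, Finset.union_insert] at d
    exact ih hK.2 <| d.cut φ k hcut <| hK.1.mono_s10 subset_rfl Finset.subset_union_left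

theorem Deriv.of_forall_label [NeZero n] (hcut : R.cut = true) (φ : Fm C)
    (h : ∀ k, Deriv R tbl H ⟨insert (φ, k) Γ, Δ⟩) : Deriv R tbl H ⟨Γ, Δ⟩ :=
  (Deriv.lshift φ 0 (h 0)).cut_image hcut φ fun k _ => h k

variable (R tbl H) in
def IsConsistent (Δ : Finset (Fm C × Fin n)) (T : Set (Fm C × Fin n)) : Prop :=
  ∀ Γ : Finset (Fm C × Fin n), ↑Γ ⊆ T → ¬ Deriv R tbl H ⟨Γ, Δ⟩

theorem IsConsistent.exists_maximal {T₀ : Set (Fm C × Fin n)} (h : IsConsistent R tbl H Δ T₀) :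
    ∃ T, T₀ ⊆ T ∧ Maximal (IsConsistent R tbl H Δ) T := by
  refine zorn_subset_nonempty {T | IsConsistent R tbl H Δ T} (fun c hc hchain hne => ?_) T₀ h
  refine ⟨⋃₀ c, fun Γ hΓ d => ?_, fun _ => Set.subset_sUnion_of_mem⟩
  obtain ⟨T, hTc, hΓT⟩ := hchain.directedOn.exists_mem_subset_of_finite_of_subset_sUnion hne
    Γ.finite_toSet hΓ
  exact hc hTc Γ hΓT d

theorem IsConsistent.label_unique {T : Set (Fm C × Fin n)} (hT : IsConsistent R tbl H Δ T)
    {φ : Fm C} {k k' : Fin n} (hk : (φ, k) ∈ T) (hk' : (φ, k') ∈ T) : k = k' := by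
  by_contra hne
  have d : Deriv R tbl H ⟨{(φ, k)}, insert (φ, k) ∅⟩ := by simpa using Deriv.ax φ k
  refine hT {(φ, k'), (φ, k)} (by simp [Set.insert_subset_iff, hk, hk']) ?_
  exact (d.rshift φ hne).mono_s10 subset_rfl (Finset.empty_subset Δ)

theorem IsConsistent.exists_label_of_maximal [NeZero n] (hcut : R.cut = true)
    {T : Set (Fm C × Fin n)} (hT : Maximal (IsConsistent R tbl H Δ) T) (φ : Fm C) :
    ∃ k, (φ, k) ∈ T := by
  by_contra! hφ
  have hder : ∀ k, ∃ Γ : Finset (Fm C × Fin n), ↑Γ ⊆ insert (φ, k) T ∧ Deriv R tbl H ⟨Γ, Δ⟩ :=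
    fun k => by simpa [IsConsistent] using mt hT.mem_of_prop_insert (hφ k)
  choose G hGT hG using hder
  let Γ := Finset.univ.biUnion fun k => (G k).erase (φ, k)
  refine hT.1 Γ (fun p hp => ?_) (Deriv.of_forall_label hcut φ fun k => (hG k).mono_s10 ?_ subset_rfl)
  · simp only [Γ, Finset.coe_biUnion, Set.mem_iUnion, Finset.mem_coe, Finset.mem_erase] at hp
    obtain ⟨k, -, hpk, hpG⟩ := hp
    exact (Set.mem_insert_iff.1 (hGT k hpG)).resolve_left hpk
  · rw [Finset.subset_insert_iff]
    exact Finset.subset_biUnion_of_mem (fun k => (G k).erase (φ, k)) (Finset.mem_univ k)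

theorem IsConsistent.exists_graph_of_maximal [NeZero n] (hcut : R.cut = true)
    {T : Set (Fm C × Fin n)} (hT : Maximal (IsConsistent R tbl H Δ) T) :
    ∃ v : Fm C → Fin n, ∀ p, p ∈ T ↔ v p.1 = p.2 := by
  choose v hv using IsConsistent.exists_label_of_maximal hcut hT
  exact ⟨v, fun p => ⟨fun hp => hT.1.label_unique (hv p.1) hp, fun hp => by
    obtain ⟨φ, k⟩ := p
    exact (show v φ = k from hp) ▸ hv φ⟩⟩

theorem IsConsistent.sat_of_deriv {T : Set (Fm C × Fin n)} {v : Fm C → Fin n}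
    (hT : IsConsistent R tbl H Δ T) (hvT : ∀ p, p ∈ T ↔ v p.1 = p.2) {S : Sequent C n}
    (d : Deriv R tbl H S) : Sat v S := by
  intro hant
  by_contra! hsuc
  refine hT _ (fun p hp => ?_) ((d.shift_succedent v hsuc).mono_s10 subset_rfl (Finset.empty_subset Δ))
  simp only [Finset.coe_union, Finset.coe_image, Set.mem_union, Finset.mem_coe,
    Set.mem_image] at hp
  rcases hp with hp | ⟨q, -, rfl⟩
  · exact (hvT p).2 (hant p hp)
  · exact (hvT _).2 rfl

theorem isVal_of_forall_sat (hrule : R.tableRuleS = true) {v : Fm C → Fin n}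
    (h : ∀ S, Deriv R tbl H S → Sat v S) : IsVal tbl v := by
  intro c args
  have d : Deriv R tbl H ⟨(args.zip (args.map v)).toFinset,
      ∅ ∪ (tbl c (args.map v)).image (fun k => (Fm.app c args, k))⟩ :=
    Deriv.tableRuleS c args _ (by simp) hrule fun p hp =>
      Deriv.of_mem p (List.mem_toFinset.2 hp) (Finset.mem_insert_self _ _)
  obtain ⟨p, hp, he⟩ := h _ d fun p hp =>
    List.forall_mem_zip_map_self v args p (List.mem_toFinset.1 hp)
  simp only [Finset.empty_union, Finset.mem_image] at hp
  obtain ⟨k, hk, rfl⟩ := hp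
  exact he ▸ hk

theorem Deriv.of_entails [NeZero n] (hcut : R.cut = true) (hrule : R.tableRuleS = true)
    {S : Sequent C n} (h : Entails tbl H S) : Deriv R tbl H S := by
  by_contra hS
  have hcon : IsConsistent R tbl H S.suc ↑S.ant :=
    fun Γ hΓ d => hS (d.mono_s10 (Finset.coe_subset.1 hΓ) subset_rfl)
  obtain ⟨T, hantT, hT⟩ := hcon.exists_maximal
  obtain ⟨v, hvT⟩ := IsConsistent.exists_graph_of_maximal hcut hT
  have hsat : ∀ S', Deriv R tbl H S' → Sat v S' := fun _ => hT.1.sat_of_deriv hvT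
  obtain ⟨p, hp, hpv⟩ := h v (isVal_of_forall_sat hrule hsat) (fun S' hS' => hsat S' (.hyp hS'))
    fun p hp => (hvT p).1 (hantT hp)
  exact hT.1 {p} (by simpa using (hvT p).2 hpv) (Deriv.of_mem p (Finset.mem_singleton_self p) hp)

end Completeness

theorem stmt10_general (hn : 2 ≤ n) (tbl : C → List (Fin n) → Finset (Fin n))
    (H : Set (Sequent C n)) (S : Sequent C n) :
    Deriv NMVL_R tbl H S ↔ Entails tbl H S :=
  have : NeZero n := ⟨by omega⟩
  ⟨Deriv.entails, Deriv.of_entails rfl rfl⟩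

/-- soundness and strong completeness of NMVL_R. -/
theorem stmt10 (hn : 2 ≤ n) (tbl : C → List (Fin n) → Finset (Fin n))
    (htbl : ∀ c ks, (tbl c ks).Nonempty) (H : Set (Sequent C n)) (S : Sequent C n) :
    Deriv NMVL_R tbl H S ↔ Entails tbl H S :=
  stmt10_general hn tbl H S
end
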